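/- arXiv:2004.07652 — 2 statements merged into one kernel-verified Lean document; each statement's English description precedes it below -/
import Mathlib

section
/- For any positive integer n, the sum over k from 0 to n of (-1)^k/(k+1) * C(n,k) * C(n+k,k) * H_k equals ((-1)^n - 1)/(n*(n+1)), where H_k denotes the k-th harmonic number. -/
/-!
Summation by parts against `H_k` (with `H_{k+1} - H_k = 1/(k+1)`) turns the sum into
`-∑_{i<n} S_i / (i+1)`, where `S_m` is the `m`-th partial sum of
`a_k = (-1)^k/(k+1) C(n,k) C(n+k,k)`. These telescope:
`n(n+1) S_m = (-1)^m (m+1) C(n,m+1) C(n+m+1,m+1)`, which vanishes at `m = n`.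
What is left is an alternating sum `∑ (-1)^k C(n,k) C(n+k,k)` with its `k = 0` term removed;
that sum is the shifted Legendre polynomial `P_n` at `1`, and `P_n(1) = (-1)^n P_n(0) = (-1)^n`.
-/

/-- The `n`-th harmonic number `H_n = ∑_{j=1}^n 1/j`. -/
def H (n : ℕ) : ℚ := ∑ j ∈ Finset.range n, 1 / (j + 1 : ℚ)

open Finset Polynomial

theorem H_succ (k : ℕ) : H (k + 1) = H k + 1 / (k + 1) := by
  simp [H, sum_range_succ]

theorem sum_range_mul_H (a : ℕ → ℚ) (n : ℕ) :
    ∑ k ∈ range (n + 1), a k * H k =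
      (∑ k ∈ range (n + 1), a k) * H n - ∑ i ∈ range n, (∑ k ∈ range (i + 1), a k) / (i + 1) := by
  have h := sum_range_by_parts H a (n + 1)
  simp only [smul_eq_mul, add_tsub_cancel_right, H_succ, add_sub_cancel_left] at h
  simp_rw [mul_comm (a _), h, one_div_mul_eq_div, mul_comm (H n)]

theorem sum_range_neg_one_pow_mul_choose_mul_choose_add {R : Type*} [Ring R] (n : ℕ) :
    ∑ k ∈ range (n + 1), (-1 : R) ^ k * n.choose k * (n + k).choose k = (-1) ^ n :=
  calc ∑ k ∈ range (n + 1), (-1 : R) ^ k * n.choose k * (n + k).choose k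
      = aeval (1 : R) (shiftedLegendre n) := by
        simp only [shiftedLegendre, map_sum, aeval_def]
        refine sum_congr rfl fun k _ => ?_
        simp [Nat.choose_symm_add (a := n)]
    _ = (-1) ^ n * aeval (0 : R) (shiftedLegendre n) := by
        rw [shiftedLegendre_eval_symm, sub_self]
    _ = (-1) ^ n := by
        rw [← coeff_zero_eq_aeval_zero', coeff_shiftedLegendre]
        simp

theorem sum_range_neg_one_pow_mul_choose_succ_mul_choose_add_succ {R : Type*} [Ring R] (n : ℕ) :
    ∑ i ∈ range n, (-1 : R) ^ i * n.choose (i + 1) * (n + (i + 1)).choose (i + 1) =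
      1 - (-1) ^ n := by
  have h := sum_range_neg_one_pow_mul_choose_mul_choose_add (R := R) n
  rw [sum_range_succ'] at h
  simp only [pow_succ, mul_neg, mul_one, neg_mul, sum_neg_distrib, pow_zero,
    Nat.choose_zero_right, Nat.cast_one] at h
  rw [← h]
  abel

theorem Nat.cast_choose_succ_mul {R : Type*} [Ring R] (n m : ℕ) :
    (n.choose (m + 1) * (m + 1) : R) = n.choose m * (n - m) := by
  rcases le_or_gt m n with h | h
  · rw [← Nat.cast_sub h]
    exact_mod_cast congrArg (Nat.cast : ℕ → R) (Nat.choose_succ_right_eq n m)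
  · simp [Nat.choose_eq_zero_of_lt h, Nat.choose_eq_zero_of_lt (h.trans m.lt_succ_self)]

theorem mul_sum_range_neg_one_pow_div_mul_choose_mul_choose {K : Type*} [Field K] [CharZero K]
    (n m : ℕ) :
    (n * (n + 1) : K) * ∑ k ∈ range (m + 1), (-1 : K) ^ k / (k + 1) * n.choose k * (n + k).choose k =
      (-1) ^ m * (m + 1) * n.choose (m + 1) * (n + (m + 1)).choose (m + 1) := by
  induction m with
  | zero => simp
  | succ m ih =>
    have hc := Nat.cast_choose_succ_mul (R := K) n (m + 1)
    have hd : ((n + (m + 1) + 1) * (n + (m + 1)).choose (m + 1) : K) =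
        (n + (m + 1 + 1)).choose (m + 1 + 1) * (m + 1 + 1) := by
      exact_mod_cast Nat.add_one_mul_choose_eq (n + (m + 1)) (m + 1)
    have hm : (m + 1 + 1 : K) ≠ 0 := by exact_mod_cast (m + 1).succ_ne_zero
    rw [sum_range_succ, mul_add, ih]
    push_cast at hc hd ⊢
    field_simp
    linear_combination (-1) ^ m * ((m + 1 + 1) * ((n + (m + 1 + 1)).choose (m + 1 + 1) : K) * hc -
      (n.choose (m + 1) : K) * (n - (m + 1)) * hd)

theorem stmt1 (n : ℕ) (hn : 0 < n) :
    ∑ k ∈ Finset.range (n + 1),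
      (-1 : ℚ) ^ k / (k + 1 : ℚ) * (n.choose k) * ((n + k).choose k) * H k =
    ((-1 : ℚ) ^ n - 1) / (n * (n + 1) : ℚ) := by
  have hn0 : (n * (n + 1) : ℚ) ≠ 0 := mul_ne_zero (by exact_mod_cast hn.ne') n.cast_add_one_ne_zero
  have partial_sum (m : ℕ) :
      ∑ k ∈ range (m + 1), (-1 : ℚ) ^ k / (k + 1) * n.choose k * (n + k).choose k =
        (-1) ^ m * (m + 1) * n.choose (m + 1) * (n + (m + 1)).choose (m + 1) / (n * (n + 1)) := by
    rw [eq_div_iff hn0, mul_comm]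
    exact mul_sum_range_neg_one_pow_div_mul_choose_mul_choose n m
  have partial_sum_div (i : ℕ) :
      (∑ k ∈ range (i + 1), (-1 : ℚ) ^ k / (k + 1) * n.choose k * (n + k).choose k) / (i + 1) =
        (-1) ^ i * n.choose (i + 1) * (n + (i + 1)).choose (i + 1) / (n * (n + 1)) := by
    rw [partial_sum]
    field_simp
  rw [sum_range_mul_H, partial_sum, Nat.choose_succ_self]
  simp_rw [partial_sum_div]
  rw [← sum_div, sum_range_neg_one_pow_mul_choose_succ_mul_choose_add_succ]
  ring
end

section
/- For any prime p ≥ 5, sum_{k=1}^{(p-1)/2} (-1)^k/k^2 ≡ 2*(-1)^{(p-1)/2} * E_{p-3} (mod p), where E_n denotes the n-th Euler number. -/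
/-!
Write `e k` for the Euler numbers and `P n x = ∑ k, (n choose k) * e k * (2x - 1)^(n - k)`
(`eulerPolyScaled`; over `ℚ` this is `2^n` times the Euler polynomial `E_n(x)`). Comparing
coefficients in `(e^t + e^{-t}) * ∑ e k t^k / k! = 2` gives `P n (x + 1) + P n x = 2^(n+1) x^n`,
so alternating power sums telescope:
`2^(n+1) * ∑_{j < m} (-1)^j j^n = P n 0 + (-1)^(m+1) P n m`.
For even `n ≥ 2` the vanishing of the odd Euler numbers gives `P n 0 = 0`, and `P n x = e n`
whenever `2x = 1`. The Euler numbers are integers, so this runs in `ZMod p` with `m = (p+1)/2`,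
where `2m = 1`; for `n = p - 3`, Fermat's little theorem turns `j^(p-3)` into `1/j^2` and
`2^(p-2)` into `1/2`.
-/

/-- The `n`-th Euler number, defined by `2/(e^x + e^{-x}) = ∑ E_n x^n/n!`. -/
noncomputable def eulerSeq (n : ℕ) : ℚ :=
  (n.factorial : ℚ) * PowerSeries.coeff (R := ℚ) n
    ((2 : PowerSeries ℚ) *
      (PowerSeries.exp ℚ + PowerSeries.rescale (-1 : ℚ) (PowerSeries.exp ℚ))⁻¹)

open PowerSeries Finset

theorem Nat.choose_mul_choose_sub_comm (n k j : ℕ) :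
    n.choose k * (n - k).choose j = n.choose j * (n - j).choose k := by
  have hk := Nat.choose_mul (n := n) (Nat.le_add_right k j)
  have hj := Nat.choose_mul (n := n) (Nat.le_add_left j k)
  rw [Nat.add_sub_cancel_left] at hk
  rw [Nat.add_sub_cancel] at hj
  rw [← hk, ← hj, Nat.choose_symm_add]

section EulerPolynomial

variable {R : Type*} [CommRing R]

theorem sum_range_choose_mul_of_le (f : ℕ → R) {s N : ℕ} (h : s ≤ N) :
    ∑ k ∈ range (N + 1), (s.choose k : R) * f k =
      ∑ k ∈ range (s + 1), (s.choose k : R) * f k := by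
  refine (sum_subset (range_subset_range.mpr (by omega)) fun k _ hk => ?_).symm
  rw [Nat.choose_eq_zero_of_lt (by simpa using hk), Nat.cast_zero, zero_mul]

theorem add_one_pow_add_sub_one_pow (y : R) {m N : ℕ} (h : m ≤ N) :
    (y + 1) ^ m + (y - 1) ^ m =
      ∑ j ∈ range (N + 1), (m.choose j : R) * ((1 + (-1) ^ (m - j)) * y ^ j) := by
  rw [sum_range_choose_mul_of_le _ h, add_pow, sub_eq_add_neg, add_pow, ← sum_add_distrib]
  exact sum_congr rfl fun _ _ => by ring

-- `s!` times the coefficient of `t^s` in `(e^t + e^{-t}) * ∑ e k t^k / k! = 2`.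
def IsEulerSequence (e : ℕ → R) : Prop :=
  ∀ s, ∑ k ∈ range (s + 1), (s.choose k : R) * (1 + (-1) ^ (s - k)) * e k =
    if s = 0 then 2 else 0

variable (e : ℕ → R)

def eulerPolyScaled (n : ℕ) (x : R) : R :=
  ∑ k ∈ range (n + 1), (n.choose k : R) * e k * (2 * x - 1) ^ (n - k)

variable {e}

theorem eulerPolyScaled_add_one_add (he : IsEulerSequence e) (n : ℕ) (x : R) :
    eulerPolyScaled e n (x + 1) + eulerPolyScaled e n x = 2 ^ (n + 1) * x ^ n := by
  -- After swapping the two sums, the inner sum is the recurrence of `e` at `n - j`.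
  have hinner : ∀ j ∈ range (n + 1), ∑ k ∈ range (n + 1),
      (n.choose k : R) * e k * ((n - k).choose j * ((1 + (-1) ^ (n - k - j)) * (2 * x) ^ j)) =
        (n.choose j : R) * (2 * x) ^ j * if n - j = 0 then 2 else 0 := by
    intro j hj
    have hext := sum_range_choose_mul_of_le (fun k => (1 + (-1) ^ (n - j - k)) * e k)
      (Nat.sub_le n j)
    simp only [← mul_assoc] at hext
    rw [← he, ← hext, mul_sum]
    refine sum_congr rfl fun k _ => ?_
    have hc : (n.choose k : R) * (n - k).choose j = n.choose j * (n - j).choose k := by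
      rw [← Nat.cast_mul, ← Nat.cast_mul, Nat.choose_mul_choose_sub_comm]
    rw [Nat.sub_right_comm n k j]
    linear_combination e k * (1 + (-1) ^ (n - j - k)) * (2 * x) ^ j * hc
  calc eulerPolyScaled e n (x + 1) + eulerPolyScaled e n x
      = ∑ k ∈ range (n + 1), ∑ j ∈ range (n + 1), (n.choose k : R) * e k *
          ((n - k).choose j * ((1 + (-1) ^ (n - k - j)) * (2 * x) ^ j)) := by
        simp only [eulerPolyScaled, ← sum_add_distrib, ← mul_add, ← mul_sum]
        refine sum_congr rfl fun k _ => ?_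
        rw [← add_one_pow_add_sub_one_pow _ (Nat.sub_le n k)]
        ring_nf
    _ = ∑ j ∈ range (n + 1), (n.choose j : R) * (2 * x) ^ j * if n - j = 0 then 2 else 0 := by
        rw [sum_comm]
        exact sum_congr rfl hinner
    _ = 2 ^ (n + 1) * x ^ n := by
        rw [sum_eq_single_of_mem n (self_mem_range_succ n) fun j hj hjn => by
          rw [if_neg (by simp at hj; omega), mul_zero]]
        simp only [Nat.choose_self, Nat.cast_one, one_mul, tsub_self, ↓reduceIte, mul_pow]
        ring

theorem eulerPolyScaled_of_two_mul_eq_one (n : ℕ) {x : R} (hx : 2 * x = 1) :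
    eulerPolyScaled e n x = e n := by
  rw [eulerPolyScaled, hx, sub_self, sum_eq_single_of_mem n (self_mem_range_succ n)
    fun k hk hkn => by rw [zero_pow (by simp at hk; omega), mul_zero]]
  simp

theorem eulerPolyScaled_zero_of_even (he : IsEulerSequence e) (he_odd : ∀ k, Odd k → e k = 0)
    (h2 : IsUnit (2 : R)) {n : ℕ} (hn : Even n) (hn0 : n ≠ 0) :
    eulerPolyScaled e n 0 = 0 := by
  have hstep := eulerPolyScaled_add_one_add he n 0
  have hsymm : eulerPolyScaled e n 1 = eulerPolyScaled e n 0 := by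
    refine sum_congr rfl fun k hk => ?_
    rcases k.even_or_odd with hk' | hk'
    · have hnk : Even (n - k) :=
        (Nat.even_sub (by simpa [Nat.lt_succ_iff] using hk)).mpr (by tauto)
      norm_num [hnk.neg_one_pow]
    · rw [he_odd k hk', mul_zero, zero_mul, zero_mul]
  rw [zero_add, hsymm, zero_pow hn0, mul_zero, ← two_mul] at hstep
  exact h2.mul_right_eq_zero.mp hstep

theorem two_pow_mul_sum_neg_one_pow_mul_pow_eq_eulerPolyScaled (he : IsEulerSequence e)
    (n m : ℕ) :
    2 ^ (n + 1) * ∑ j ∈ range m, (-1) ^ j * (j : R) ^ n =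
      eulerPolyScaled e n 0 + (-1) ^ (m + 1) * eulerPolyScaled e n m := by
  induction m with
  | zero => simp
  | succ m ih =>
    rw [sum_range_succ, mul_add, ih, Nat.cast_succ]
    linear_combination (-(-1 : R) ^ m) * eulerPolyScaled_add_one_add he n (m : R)

theorem two_pow_mul_sum_neg_one_pow_mul_pow_of_two_mul_eq_one (he : IsEulerSequence e)
    (he_odd : ∀ k, Odd k → e k = 0) {n : ℕ} (hn : Even n) (hn0 : n ≠ 0) {m : ℕ}
    (hm : 2 * (m : R) = 1) :
    2 ^ (n + 1) * ∑ j ∈ range m, (-1) ^ j * (j : R) ^ n = (-1) ^ (m + 1) * e n := by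
  rw [two_pow_mul_sum_neg_one_pow_mul_pow_eq_eulerPolyScaled he,
    eulerPolyScaled_of_two_mul_eq_one n hm,
    eulerPolyScaled_zero_of_even he he_odd (.of_mul_eq_one _ hm) hn hn0, zero_add]

end EulerPolynomial

noncomputable def twoCosh : ℚ⟦X⟧ := exp ℚ + rescale (-1) (exp ℚ)

theorem coeff_twoCosh (k : ℕ) : coeff k twoCosh = (1 + (-1) ^ k) / k.factorial := by
  simp only [twoCosh, map_add, coeff_rescale, coeff_exp, Algebra.algebraMap_self,
    RingHom.id_apply]
  ring

theorem constantCoeff_twoCosh_ne_zero : constantCoeff twoCosh ≠ 0 := by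
  rw [← coeff_zero_eq_constantCoeff_apply, coeff_twoCosh]
  norm_num

theorem rescale_neg_one_twoCosh : rescale (-1) twoCosh = twoCosh := by
  rw [twoCosh, map_add, rescale_rescale]
  norm_num [rescale_one, add_comm]

theorem coeff_two_mul_inv_twoCosh (n : ℕ) :
    coeff n (2 * twoCosh⁻¹) = eulerSeq n / n.factorial := by
  rw [eulerSeq, twoCosh]
  field_simp

theorem isEulerSequence_eulerSeq : IsEulerSequence eulerSeq := by
  intro s
  have h : 2 * twoCosh⁻¹ * twoCosh = 2 := by
    rw [mul_assoc, PowerSeries.inv_mul_cancel _ constantCoeff_twoCosh_ne_zero, mul_one]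
  calc ∑ k ∈ range (s + 1), (s.choose k : ℚ) * (1 + (-1) ^ (s - k)) * eulerSeq k
      = ∑ k ∈ range (s + 1),
          (s.factorial : ℚ) * (coeff k (2 * twoCosh⁻¹) * coeff (s - k) twoCosh) := by
        refine sum_congr rfl fun k hk => ?_
        rw [coeff_two_mul_inv_twoCosh, coeff_twoCosh,
          Nat.cast_choose ℚ (mem_range_succ_iff.mp hk)]
        field_simp
    _ = s.factorial * coeff s (2 * twoCosh⁻¹ * twoCosh) := by
        rw [coeff_mul, Nat.sum_antidiagonal_eq_sum_range_succ_mk, mul_sum]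
    _ = if s = 0 then 2 else 0 := by
        rw [h, ← map_ofNat C, coeff_C]
        split_ifs with hs <;> simp [hs]

theorem eulerSeq_of_odd {n : ℕ} (hn : Odd n) : eulerSeq n = 0 := by
  have h : rescale (-1) (2 * twoCosh⁻¹) = 2 * twoCosh⁻¹ := by
    rw [map_mul, map_ofNat]
    congr 1
    rw [PowerSeries.eq_inv_iff_mul_eq_one constantCoeff_twoCosh_ne_zero]
    nth_rw 2 [← rescale_neg_one_twoCosh]
    rw [← map_mul, PowerSeries.inv_mul_cancel _ constantCoeff_twoCosh_ne_zero, map_one]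
  have hn' := congrArg (coeff n) h
  rw [coeff_rescale, coeff_two_mul_inv_twoCosh, hn.neg_one_pow] at hn'
  have : (n.factorial : ℚ) ≠ 0 := by positivity
  field_simp at hn'
  linarith

theorem half_one_add_neg_one_pow_mem_bot (j : ℕ) :
    (1 + (-1 : ℚ) ^ j) / 2 ∈ (⊥ : Subring ℚ) := by
  rcases j.even_or_odd with hj | hj
  · rw [hj.neg_one_pow]
    norm_num [one_mem]
  · rw [hj.neg_one_pow]
    norm_num [zero_mem]

theorem eulerSeq_mem_bot (n : ℕ) : eulerSeq n ∈ (⊥ : Subring ℚ) := by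
  induction n using Nat.strong_induction_on with
  | _ n ih =>
  have hrec := isEulerSequence_eulerSeq n
  rw [sum_range_succ, Nat.choose_self, Nat.sub_self] at hrec
  rcases n with _ | n
  · have h0 : (1 + 1) * eulerSeq 0 = 2 := by simpa using hrec
    rw [show eulerSeq 0 = 1 by linarith]
    exact one_mem _
  · have h : eulerSeq (n + 1) = -∑ k ∈ range (n + 1),
        ((n + 1).choose k : ℚ) * ((1 + (-1) ^ (n + 1 - k)) / 2) * eulerSeq k := by
      have hsum : ∑ k ∈ range (n + 1), ((n + 1).choose k : ℚ) * (1 + (-1) ^ (n + 1 - k)) *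
          eulerSeq k = 2 * ∑ k ∈ range (n + 1),
            ((n + 1).choose k : ℚ) * ((1 + (-1) ^ (n + 1 - k)) / 2) * eulerSeq k := by
        rw [mul_sum]
        exact sum_congr rfl fun _ _ => by ring
      rw [hsum, if_neg n.succ_ne_zero] at hrec
      linear_combination hrec / 2
    rw [h]
    exact neg_mem (sum_mem fun k hk => mul_mem (mul_mem (natCast_mem _ _)
      (half_one_add_neg_one_pow_mem_bot _)) (ih k (mem_range.mp hk)))

noncomputable def eulerInt (n : ℕ) : ℤ := (eulerSeq n).num

theorem cast_eulerInt (n : ℕ) : (eulerInt n : ℚ) = eulerSeq n := by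
  obtain ⟨z, hz⟩ := Subring.mem_bot.mp (eulerSeq_mem_bot n)
  rw [eulerInt, ← hz, Rat.num_intCast]

theorem eulerInt_of_odd {n : ℕ} (hn : Odd n) : eulerInt n = 0 := by
  exact_mod_cast (cast_eulerInt n).trans (eulerSeq_of_odd hn)

theorem isEulerSequence_eulerInt (R : Type*) [CommRing R] :
    IsEulerSequence fun k => (eulerInt k : R) := by
  intro s
  have h : ∑ k ∈ range (s + 1), (s.choose k : ℤ) * (1 + (-1) ^ (s - k)) * eulerInt k =
      if s = 0 then 2 else 0 := by
    have hq := isEulerSequence_eulerSeq s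
    simp only [← cast_eulerInt] at hq
    exact_mod_cast hq
  simpa [apply_ite] using congrArg (Int.cast : ℤ → R) h

section RatCast

variable {α : Type*} [DivisionRing α]

theorem Rat.natCast_den_add_ne_zero {q r : ℚ} (hq : (q.den : α) ≠ 0) (hr : (r.den : α) ≠ 0) :
    ((q + r).den : α) ≠ 0 := by
  obtain ⟨c, hc⟩ := Rat.add_den_dvd q r
  intro h
  apply mul_ne_zero hq hr
  rw [← Nat.cast_mul, hc, Nat.cast_mul, h, zero_mul]

theorem Rat.cast_sum_of_den_ne_zero {ι : Type*} (s : Finset ι) (f : ι → ℚ)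
    (hf : ∀ i ∈ s, ((f i).den : α) ≠ 0) :
    ((∑ i ∈ s, f i : ℚ) : α) = ∑ i ∈ s, (f i : α) := by
  suffices ((∑ i ∈ s, f i : ℚ) : α) = ∑ i ∈ s, (f i : α) ∧ ((∑ i ∈ s, f i).den : α) ≠ 0 from
    this.1
  induction s using Finset.cons_induction with
  | empty => simp
  | cons a s ha ih =>
    obtain ⟨hsum, hden⟩ := ih fun i hi => hf i (mem_cons_of_mem hi)
    have ha := hf a (mem_cons_self a s)
    rw [sum_cons, sum_cons, Rat.cast_add_of_ne_zero ha hden, hsum]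
    exact ⟨rfl, Rat.natCast_den_add_ne_zero ha hden⟩

theorem Rat.natCast_den_intCast_div_natCast_ne_zero (a : ℤ) {b : ℕ} (hb : (b : α) ≠ 0) :
    (((a : ℚ) / b).den : α) ≠ 0 := by
  have hdvd : (((a : ℚ) / b).den : ℤ) ∣ b := by
    have h := Rat.den_dvd a b
    rwa [Rat.divInt_eq_div, Int.cast_natCast] at h
  obtain ⟨c, hc⟩ := Int.natCast_dvd_natCast.mp hdvd
  intro h
  apply hb
  rw [hc, Nat.cast_mul, h, zero_mul]

theorem Rat.cast_intCast_div_natCast (a : ℤ) {b : ℕ} (hb : (b : α) ≠ 0) :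
    (((a : ℚ) / b : ℚ) : α) = a / b := by
  rw [Rat.cast_div_of_ne_zero] <;> simp [hb]

end RatCast

theorem ZMod.inv_pow_eq_pow_sub_one_sub {p : ℕ} [Fact p.Prime] {a : ZMod p} (ha : a ≠ 0)
    {k : ℕ} (hk : k ≤ p - 1) : (a ^ k)⁻¹ = a ^ (p - 1 - k) := by
  refine inv_eq_of_mul_eq_one_right ?_
  rw [← pow_add, Nat.add_sub_cancel' hk, ZMod.pow_card_sub_one_eq_one ha]

theorem ZMod.natCast_ne_zero_of_pos_of_lt {n a : ℕ} (ha : 0 < a) (han : a < n) :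
    (a : ZMod n) ≠ 0 := by
  rw [Ne, ZMod.natCast_eq_zero_iff]
  exact Nat.not_dvd_of_pos_of_lt ha han

theorem ratCast_sum_neg_one_pow_div_sq (p : ℕ) [Fact p.Prime] {r : ℕ} (hr : r < p) :
    ((∑ k ∈ range r, (-1 : ℚ) ^ (k + 1) / (k + 1 : ℚ) ^ 2 : ℚ) : ZMod p) =
      ∑ k ∈ range r, (-1) ^ (k + 1) / ((k + 1 : ℕ) : ZMod p) ^ 2 := by
  have hne : ∀ k ∈ range r, (((k + 1) ^ 2 : ℕ) : ZMod p) ≠ 0 := fun k hk => by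
    rw [Nat.cast_pow]
    exact pow_ne_zero 2 (ZMod.natCast_ne_zero_of_pos_of_lt k.succ_pos (by simp at hk; omega))
  have hterm : ∀ k : ℕ, (-1 : ℚ) ^ (k + 1) / (k + 1 : ℚ) ^ 2 =
      (((-1) ^ (k + 1) : ℤ) : ℚ) / (((k + 1) ^ 2 : ℕ) : ℚ) := fun k => by push_cast; rfl
  simp_rw [hterm]
  rw [Rat.cast_sum_of_den_ne_zero _ _ fun k hk =>
    Rat.natCast_den_intCast_div_natCast_ne_zero _ (hne k hk)]
  refine sum_congr rfl fun k hk => ?_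
  rw [Rat.cast_intCast_div_natCast _ (hne k hk)]
  push_cast
  rfl

theorem sum_neg_one_pow_div_sq_eq_sum_pow (p : ℕ) [Fact p.Prime] {r : ℕ} (hr : r < p)
    (hp : 4 ≤ p) :
    ∑ k ∈ range r, (-1) ^ (k + 1) / ((k + 1 : ℕ) : ZMod p) ^ 2 =
      ∑ j ∈ range (r + 1), (-1) ^ j * (j : ZMod p) ^ (p - 3) := by
  rw [sum_range_succ', Nat.cast_zero, zero_pow (by omega), mul_zero, add_zero]
  refine sum_congr rfl fun k hk => ?_
  rw [div_eq_mul_inv, ZMod.inv_pow_eq_pow_sub_one_sub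
    (ZMod.natCast_ne_zero_of_pos_of_lt k.succ_pos (by simp at hk; omega)) (by omega)]
  rfl

theorem stmt4 (p : ℕ) [hp : Fact p.Prime] (hp5 : 5 ≤ p) :
    (((∑ k ∈ Finset.range ((p - 1) / 2), (-1 : ℚ) ^ (k + 1) / (k + 1 : ℚ) ^ 2) : ℚ) : ZMod p) =
      ((2 * (-1 : ℚ) ^ ((p - 1) / 2) * eulerSeq (p - 3) : ℚ) : ZMod p) := by
  have hodd : p % 2 = 1 := Nat.odd_iff.mp (hp.out.odd_of_ne_two (by omega))
  set r := (p - 1) / 2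
  have hm : 2 * ((r + 1 : ℕ) : ZMod p) = 1 := by
    have h : ((2 * (r + 1) : ℕ) : ZMod p) = ((p + 1 : ℕ) : ZMod p) := by congr 1; omega
    push_cast [ZMod.natCast_self] at h ⊢
    linear_combination h
  have key := two_pow_mul_sum_neg_one_pow_mul_pow_of_two_mul_eq_one
    (isEulerSequence_eulerInt (ZMod p)) (fun k hk => by rw [eulerInt_of_odd hk, Int.cast_zero])
    (n := p - 3) ⟨r - 1, by omega⟩ (by omega) hm
  have hfermat : (2 : ZMod p) * 2 ^ (p - 3 + 1) = 1 := by
    rw [← pow_succ', show p - 3 + 1 + 1 = p - 1 by omega]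
    exact ZMod.pow_card_sub_one_eq_one (left_ne_zero_of_mul_eq_one hm)
  have hRHS : ((2 * (-1 : ℚ) ^ r * eulerSeq (p - 3) : ℚ) : ZMod p) =
      2 * (-1) ^ r * (eulerInt (p - 3) : ZMod p) := by
    have h : 2 * (-1 : ℚ) ^ r * eulerSeq (p - 3) =
        ((2 * (-1) ^ r * eulerInt (p - 3) : ℤ) : ℚ) := by
      push_cast [cast_eulerInt]
      rfl
    rw [h, Rat.cast_intCast]
    push_cast
    rfl
  rw [ratCast_sum_neg_one_pow_div_sq p (by omega),
    sum_neg_one_pow_div_sq_eq_sum_pow p (by omega) (by omega), hRHS]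
  linear_combination
    2 * key - (∑ j ∈ range (r + 1), (-1) ^ j * (j : ZMod p) ^ (p - 3)) * hfermat
end
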